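/- With the sets F_n and D_n defined by the recursive Mex algorithm, for every n ≥ 0 the set F_n ∩ [Mex(F_n), Mex(F_n) + Mex(D_n) - 1] contains no 4 consecutive integers (i.e., there is no integer k with k, k+1, k+2, k+3 all in this set). -/

import Mathlib

/-- Minimum excluded value of a set of natural numbers. -/
noncomputable def mex (S : Set ℕ) : ℕ := sInf {m : ℕ | m ∉ S}

/-- Coordinates of a set of triples. -/
def coords (G : Set (ℕ × ℕ × ℕ)) : Set ℕ :=
  {k | ∃ x ∈ G, k = x.1 ∨ k = x.2.1 ∨ k = x.2.2}

/-- Pairwise coordinate differences of a set of triples. -/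
def diffs (G : Set (ℕ × ℕ × ℕ)) : Set ℕ :=
  {d | ∃ x ∈ G, d = x.2.1 - x.1 ∨ d = x.2.2 - x.2.1 ∨ d = x.2.2 - x.1}

/-- One step of the Mex algorithm: the next P-position. -/
noncomputable def step (G : Set (ℕ × ℕ × ℕ)) : ℕ × ℕ × ℕ :=
  let F := coords G
  let D := diffs G
  let a := mex F
  let b := mex ((fun d => a + d) '' D ∪ Set.Icc 1 a ∪ F)
  let c := mex ((fun d => b + d) '' D ∪ Set.Icc 1 b ∪ F)
  (a, b, c)

/-- The sets `G_n` of P-positions computed by the Mex algorithm. -/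
noncomputable def Gset : ℕ → Set (ℕ × ℕ × ℕ)
  | 0 => {(0, 0, 0)}
  | n + 1 => Gset n ∪ {step (Gset n)}

/-- The `n`-th P-position `(v_1(n), v_2(n), v_3(n))`. -/
noncomputable def v : ℕ → ℕ × ℕ × ℕ
  | 0 => (0, 0, 0)
  | n + 1 => step (Gset n)

noncomputable def v1 (n : ℕ) : ℕ := (v n).1
noncomputable def v2 (n : ℕ) : ℕ := (v n).2.1
noncomputable def v3 (n : ℕ) : ℕ := (v n).2.2

/-- `F_n`: the set of coordinates of elements of `G_n`. -/
noncomputable def Fset (n : ℕ) : Set ℕ := coords (Gset n)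

/-- `D_n`: the set of pairwise coordinate differences over `G_n`. -/
noncomputable def Dset (n : ℕ) : Set ℕ := diffs (Gset n)

/-!
Write `a, b, c` for `v₁(n+1), v₂(n+1), v₃(n+1)` and `E_n = Mex(D_n)`; by construction
`a + E_n ≤ b` and `b + E_n ≤ c`. By strong induction every step is *regular*: `c = b + E_n` and
`b - a < E_{n+1}`. Regularity of the earlier steps makes `E` strictly increasing, keeps every
earlier coordinate below `a + 2 E_n ≤ b + E_n` (whence `c = b + E_n`), and spaces the `v₂(j)` at
least 2 apart, the `v₃(j)` at least 3 apart and the `v₃(j) - v₁(j)` at least 2 apart; the last two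
spacings let `b` overshoot `a + E_n` only across elements of `D_n` (whence `b - a < E_{n+1}`).
Since `v₁` is strictly increasing, every element of `F_n` from `Mex(F_n) = v₁(n+1)` on is some
`v₂(j)` or `v₃(j)`, and a union of a 2-spaced and a 3-spaced set contains no four consecutive
integers.
-/

section Mex

variable {S T : Set ℕ} {k : ℕ}

lemma mem_of_lt_mex (h : k < mex S) : k ∈ S :=
  not_not.1 (Nat.notMem_of_lt_sInf h)

lemma mex_le_of_notMem (h : k ∉ S) : mex S ≤ k :=
  Nat.sInf_le h

lemma mex_notMem (hS : S.Finite) : mex S ∉ S :=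
  Nat.sInf_mem hS.infinite_compl.nonempty

lemma mex_mono (hT : T.Finite) (h : S ⊆ T) : mex S ≤ mex T :=
  mex_le_of_notMem fun hS => mex_notMem hT (h hS)

lemma lt_mex_of_Iic_subset (hS : S.Finite) (h : Set.Iic k ⊆ S) : k < mex S := by
  by_contra! hk
  exact mex_notMem hS (h hk)

end Mex

/-- The value `Mex((s + D) ∪ {1, …, s} ∪ F)` by which the algorithm picks `v₂` from `v₁` and
`v₃` from `v₂`. -/
noncomputable def mexAbove (s : ℕ) (D F : Set ℕ) : ℕ :=
  mex ((fun d => s + d) '' D ∪ Set.Icc 1 s ∪ F)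

section MexAbove

variable {s m : ℕ} {D F : Set ℕ}

lemma mexAbove_le (hs : s < m) (hD : m - s ∉ D) (hF : m ∉ F) : mexAbove s D F ≤ m := by
  refine mex_le_of_notMem ?_
  rintro ((⟨d, hd, rfl⟩ | ⟨-, hm⟩) | hm)
  · exact hD (by simpa using hd)
  · omega
  · exact hF hm

lemma mem_of_add_lt_mexAbove {e : ℕ} (he : 0 < e) (hlt : s + e < mexAbove s D F)
    (hF : s + e ∉ F) : e ∈ D := by
  by_contra hD
  exact (mexAbove_le (by omega) (by simpa using hD) hF).not_gt hlt

variable (hD : D.Finite) (hF : F.Finite)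
include hD hF

lemma mexAbove_notMem : mexAbove s D F ∉ (fun d => s + d) '' D ∪ Set.Icc 1 s ∪ F :=
  mex_notMem (((hD.image _).union (Set.finite_Icc _ _)).union hF)

lemma mexAbove_notMem_right : mexAbove s D F ∉ F :=
  fun h => mexAbove_notMem hD hF (Or.inr h)

lemma lt_mexAbove (h0 : 0 ∈ F) : s < mexAbove s D F := by
  by_contra! h
  have hpos : mexAbove s D F ≠ 0 := fun h' => mexAbove_notMem_right hD hF (h' ▸ h0)
  exact mexAbove_notMem hD hF (Or.inl (Or.inr ⟨by omega, h⟩))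

lemma add_mex_le_mexAbove (h0 : 0 ∈ F) : s + mex D ≤ mexAbove s D F := by
  by_contra! h
  have hs : s < mexAbove s D F := lt_mexAbove hD hF h0
  have hmem : mexAbove s D F - s ∈ D := mem_of_lt_mex (by omega)
  exact mexAbove_notMem hD hF (Or.inl (Or.inl ⟨_, hmem, show s + _ = _ by omega⟩))

end MexAbove

def SpacedBy (g : ℕ) (S : Set ℕ) : Prop :=
  ∀ x ∈ S, ∀ y ∈ S, x < y → x + g ≤ y

section SpacedBy

variable {g n : ℕ} {S T : Set ℕ}

lemma SpacedBy.mono (h : SpacedBy g T) (hST : S ⊆ T) : SpacedBy g S :=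
  fun x hx y hy => h x (hST hx) y (hST hy)

lemma spacedBy_image_Iic {f : ℕ → ℕ} (h : ∀ i j, i < j → j ≤ n → f i + g ≤ f j) :
    SpacedBy g (f '' Set.Iic n) := by
  rintro _ ⟨i, hi, rfl⟩ _ ⟨j, hj, rfl⟩ hij
  rcases lt_trichotomy i j with hlt | rfl | hgt
  · exact h i j hlt hj
  · exact absurd hij (lt_irrefl _)
  · have := h j i hgt hi
    omega

/-- If `k + 1 ∈ B` then `k, k + 2 ∈ C` are too close; if `k + 1 ∈ C` then `k + 2, k + 3 ∈ B` are. -/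
lemma not_four_consecutive {B C : Set ℕ} (hB : SpacedBy 2 B) (hC : SpacedBy 3 C) (hS : S ⊆ B ∪ C) :
    ¬ ∃ k : ℕ, ∀ i : ℕ, i < 4 → k + i ∈ S := by
  rintro ⟨k, hk⟩
  have mem (i : ℕ) (hi : i < 4) : k + i ∈ B ∪ C := hS (hk i hi)
  rcases mem 1 (by norm_num) with h1 | h1
  · have h0 : k + 0 ∈ C := (mem 0 (by norm_num)).resolve_left fun h0 => by
      have := hB _ h0 _ h1 (by omega); omega
    have h2 : k + 2 ∈ C := (mem 2 (by norm_num)).resolve_left fun h2 => by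
      have := hB _ h1 _ h2 (by omega); omega
    have := hC _ h0 _ h2 (by omega); omega
  · have h2 : k + 2 ∈ B := (mem 2 (by norm_num)).resolve_right fun h2 => by
      have := hC _ h1 _ h2 (by omega); omega
    have h3 : k + 3 ∈ B := (mem 3 (by norm_num)).resolve_right fun h3 => by
      have := hC _ h1 _ h3 (by omega); omega
    have := hB _ h2 _ h3 (by omega); omega

end SpacedBy

lemma coords_finite {G : Set (ℕ × ℕ × ℕ)} (hG : G.Finite) : (coords G).Finite :=
  (hG.biUnion fun x _ => Set.toFinite {x.1, x.2.1, x.2.2}).subset fun _ ⟨x, hx, hk⟩ =>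
    Set.mem_biUnion hx (by simpa using hk)

lemma diffs_finite {G : Set (ℕ × ℕ × ℕ)} (hG : G.Finite) : (diffs G).Finite :=
  (hG.biUnion fun x _ => Set.toFinite {x.2.1 - x.1, x.2.2 - x.2.1, x.2.2 - x.1}).subset
    fun _ ⟨x, hx, hk⟩ => Set.mem_biUnion hx (by simpa using hk)

lemma Gset_eq_image (n : ℕ) : Gset n = v '' Set.Iic n := by
  induction n with
  | zero => rw [show Set.Iic 0 = {0} from Set.Iic_bot, Set.image_singleton]; rfl
  | succ n ih =>
    change Gset n ∪ {v (n + 1)} = _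
    rw [ih, show Set.Iic (n + 1) = _ from Order.Iic_succ n, Set.image_insert_eq,
      Set.union_comm, Set.insert_eq]
    rfl

lemma mem_Fset_iff {x n : ℕ} : x ∈ Fset n ↔ ∃ j ≤ n, x = v1 j ∨ x = v2 j ∨ x = v3 j := by
  simp [Fset, coords, Gset_eq_image, v1, v2, v3]

lemma mem_Dset_iff {d n : ℕ} :
    d ∈ Dset n ↔ ∃ j ≤ n, d = v2 j - v1 j ∨ d = v3 j - v2 j ∨ d = v3 j - v1 j := by
  simp [Dset, diffs, Gset_eq_image, v1, v2, v3]

lemma Fset_finite (n : ℕ) : (Fset n).Finite :=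
  coords_finite (Gset_eq_image n ▸ (Set.finite_Iic n).image v)

lemma Dset_finite (n : ℕ) : (Dset n).Finite :=
  diffs_finite (Gset_eq_image n ▸ (Set.finite_Iic n).image v)

lemma Gset_mono : Monotone Gset := fun m n h => by
  simpa only [Gset_eq_image] using Set.image_mono (Set.Iic_subset_Iic.2 h)

lemma Fset_mono : Monotone Fset := fun _ _ h _ ⟨x, hx, hk⟩ => ⟨x, Gset_mono h hx, hk⟩

lemma Dset_mono : Monotone Dset := fun _ _ h _ ⟨x, hx, hk⟩ => ⟨x, Gset_mono h hx, hk⟩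

lemma zero_mem_Fset (n : ℕ) : 0 ∈ Fset n := mem_Fset_iff.2 ⟨0, Nat.zero_le n, Or.inl rfl⟩

lemma zero_mem_Dset (n : ℕ) : 0 ∈ Dset n := mem_Dset_iff.2 ⟨0, Nat.zero_le n, Or.inl rfl⟩

lemma v1_succ (n : ℕ) : v1 (n + 1) = mex (Fset n) := rfl

lemma v3_succ (n : ℕ) : v3 (n + 1) = mexAbove (v2 (n + 1)) (Dset n) (Fset n) := rfl

lemma one_le_v1_succ (n : ℕ) : 1 ≤ v1 (n + 1) :=
  Nat.one_le_iff_ne_zero.2 fun h => mex_notMem (Fset_finite n) ((v1_succ n ▸ h) ▸ zero_mem_Fset n)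

lemma one_le_mex_Dset (n : ℕ) : 1 ≤ mex (Dset n) :=
  Nat.one_le_iff_ne_zero.2 fun h => mex_notMem (Dset_finite n) (h ▸ zero_mem_Dset n)

lemma mex_Dset_mono {m n : ℕ} (h : m ≤ n) : mex (Dset m) ≤ mex (Dset n) :=
  mex_mono (Dset_finite n) (Dset_mono h)

lemma v1_add_mex_le_v2 (n : ℕ) : v1 (n + 1) + mex (Dset n) ≤ v2 (n + 1) :=
  add_mex_le_mexAbove (Dset_finite n) (Fset_finite n) (zero_mem_Fset n)

lemma v2_add_mex_le_v3 (n : ℕ) : v2 (n + 1) + mex (Dset n) ≤ v3 (n + 1) :=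
  add_mex_le_mexAbove (Dset_finite n) (Fset_finite n) (zero_mem_Fset n)

lemma v1_le_v2 (j : ℕ) : v1 j ≤ v2 j := by
  cases j with
  | zero => exact le_rfl
  | succ n => exact (Nat.le_add_right _ _).trans (v1_add_mex_le_v2 n)

lemma v2_le_v3 (j : ℕ) : v2 j ≤ v3 j := by
  cases j with
  | zero => exact le_rfl
  | succ n => exact (Nat.le_add_right _ _).trans (v2_add_mex_le_v3 n)

/-- Everything up to `v₁(m)` is a coordinate of `G_m`, so `v₁(m + 1) = Mex(F_m)` lies beyond it. -/
lemma strictMono_v1 : StrictMono v1 := by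
  refine strictMono_nat_of_lt_succ fun m => lt_mex_of_Iic_subset (Fset_finite m) fun x hx => ?_
  rcases (Set.mem_Iic.1 hx).lt_or_eq with hlt | rfl
  · cases m with
    | zero => exact absurd hlt (Nat.not_lt_zero _)
    | succ k => exact Fset_mono k.le_succ (mem_of_lt_mex hlt)
  · exact mem_Fset_iff.2 ⟨m, le_rfl, Or.inl rfl⟩

lemma mem_image_of_v1_succ_le {n x : ℕ} (hx : x ∈ Fset n) (ha : v1 (n + 1) ≤ x) :
    x ∈ v2 '' Set.Iic n ∪ v3 '' Set.Iic n := by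
  obtain ⟨j, hj, rfl | rfl | rfl⟩ := mem_Fset_iff.1 hx
  · exact absurd (strictMono_v1 (Nat.lt_succ_of_le hj)) ha.not_gt
  · exact Or.inl ⟨j, hj, rfl⟩
  · exact Or.inr ⟨j, hj, rfl⟩

def Regular (n : ℕ) : Prop :=
  v3 (n + 1) = v2 (n + 1) + mex (Dset n) ∧ v2 (n + 1) < v1 (n + 1) + mex (Dset (n + 1))

section Regular

variable {n : ℕ}

lemma Regular.mex_Dset_lt (h : Regular n) : mex (Dset n) < mex (Dset (n + 1)) := by
  have := v1_add_mex_le_v2 n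
  have := h.2
  omega

lemma v2_add_two_le (hI : ∀ k < n, Regular k) {j : ℕ} (hj : j ≤ n) :
    v2 j + 2 ≤ v1 (n + 1) + mex (Dset n) := by
  cases j with
  | zero => have := one_le_v1_succ n; have := one_le_mex_Dset n; change 2 ≤ _; omega
  | succ k =>
    have := (hI k hj).2
    have := strictMono_v1 (show k + 1 < n + 1 by omega)
    have := mex_Dset_mono hj
    omega

lemma v3_add_three_le (hI : ∀ k < n, Regular k) {j : ℕ} (hj : j ≤ n) :
    v3 j + 3 ≤ v1 (n + 1) + 2 * mex (Dset n) := by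
  cases j with
  | zero => have := one_le_v1_succ n; have := one_le_mex_Dset n; change 3 ≤ _; omega
  | succ k =>
    have := (hI k hj).mex_Dset_lt
    obtain ⟨hc, hb⟩ := hI k hj
    have := strictMono_v1 (show k + 1 < n + 1 by omega)
    have := mex_Dset_mono hj
    omega

lemma v3_sub_v1_add_two_le (hI : ∀ k < n, Regular k) {j : ℕ} (hj : j ≤ n) :
    v3 j - v1 j + 2 ≤ 2 * mex (Dset n) := by
  cases j with
  | zero => have := one_le_mex_Dset n; change 2 ≤ _; omega
  | succ k =>
    have := (hI k hj).mex_Dset_lt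
    obtain ⟨hc, hb⟩ := hI k hj
    have := v1_le_v2 (k + 1)
    have := mex_Dset_mono hj
    omega

lemma spacedBy_v2 (hI : ∀ k < n, Regular k) : SpacedBy 2 (v2 '' Set.Iic n) := by
  refine spacedBy_image_Iic fun i j hij hj => ?_
  obtain ⟨m, rfl⟩ : ∃ m, j = m + 1 := ⟨j - 1, by omega⟩
  have := v2_add_two_le (fun k hk => hI k (by omega)) (Nat.le_of_lt_succ hij)
  have := v1_add_mex_le_v2 m
  omega

lemma spacedBy_v3 (hI : ∀ k < n, Regular k) : SpacedBy 3 (v3 '' Set.Iic n) := by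
  refine spacedBy_image_Iic fun i j hij hj => ?_
  obtain ⟨m, rfl⟩ : ∃ m, j = m + 1 := ⟨j - 1, by omega⟩
  have := v3_add_three_le (fun k hk => hI k (by omega)) (Nat.le_of_lt_succ hij)
  have := v1_add_mex_le_v2 m
  have := v2_add_mex_le_v3 m
  omega

lemma spacedBy_v3_sub_v1 (hI : ∀ k < n, Regular k) :
    SpacedBy 2 ((fun j => v3 j - v1 j) '' Set.Iic n) := by
  refine spacedBy_image_Iic fun i j hij hj => ?_
  obtain ⟨m, rfl⟩ : ∃ m, j = m + 1 := ⟨j - 1, by omega⟩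
  have := v3_sub_v1_add_two_le (fun k hk => hI k (by omega)) (Nat.le_of_lt_succ hij)
  have := v1_add_mex_le_v2 m
  have := v2_add_mex_le_v3 m
  omega

lemma spacedBy_Fset_inter_Ici (hI : ∀ k < n, Regular k) :
    SpacedBy 3 (Fset n ∩ Set.Ici (v1 (n + 1) + mex (Dset n))) := by
  refine (spacedBy_v3 hI).mono fun x ⟨hx, hxθ⟩ => ?_
  rcases mem_image_of_v1_succ_le hx (le_trans (Nat.le_add_right _ _) hxθ) with ⟨j, hj, rfl⟩ | hx3
  · have := v2_add_two_le hI hj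
    exact absurd (Set.mem_Ici.1 hxθ) (by omega)
  · exact hx3

lemma spacedBy_Dset_inter_Ioi (hI : ∀ k < n, Regular k) :
    SpacedBy 2 (Dset n ∩ Set.Ioi (mex (Dset n))) := by
  refine (spacedBy_v3_sub_v1 hI).mono fun d ⟨hd, hdE⟩ => ?_
  rw [Set.mem_Ioi] at hdE
  obtain ⟨j, hj, rfl | rfl | rfl⟩ := mem_Dset_iff.1 hd
  · cases j with
    | zero => exact absurd hdE (by simp [v1, v2, v])
    | succ k =>
      have := (hI k hj).2
      have := mex_Dset_mono hj
      omega
  · cases j with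
    | zero => exact absurd hdE (by simp [v2, v3, v])
    | succ k =>
      have := (hI k hj).1
      have := mex_Dset_mono (Nat.le_of_succ_le hj)
      omega
  · exact ⟨j, hj, rfl⟩

lemma lt_of_mem_Fset (hI : ∀ k < n, Regular k) {x : ℕ} (hx : x ∈ Fset n) :
    x < v1 (n + 1) + 2 * mex (Dset n) := by
  obtain ⟨j, hj, rfl | rfl | rfl⟩ := mem_Fset_iff.1 hx <;>
  · have := v3_add_three_le hI hj
    have := v1_le_v2 j
    have := v2_le_v3 j
    omega

lemma v3_succ_eq (hI : ∀ k < n, Regular k) : v3 (n + 1) = v2 (n + 1) + mex (Dset n) := by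
  refine le_antisymm ?_ (v2_add_mex_le_v3 n)
  rw [v3_succ]
  refine mexAbove_le ?_ ?_ fun h => ?_
  · have := one_le_mex_Dset n
    omega
  · simpa using mex_notMem (Dset_finite n)
  · have := lt_of_mem_Fset hI h
    have := v1_add_mex_le_v2 n
    omega

/-- With `a = v₁(n+1)`, `b = v₂(n+1)`, `E = Mex(D_n)`: since `b` skips `a + E`, that value is in
`F_n`, so `a + E + 1, a + E + 2 ∉ F_n`; hence `b` skipping `a + E + 1` or `a + E + 2` forces
`E + 1` or `E + 2` into `D_n`, and both cannot be there. -/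
lemma mem_Dset_of_lt_v2_sub_v1 (hI : ∀ k < n, Regular k) {d : ℕ} (hEd : mex (Dset n) < d)
    (hdb : d < v2 (n + 1) - v1 (n + 1)) : d ∈ Dset n := by
  have hF := spacedBy_Fset_inter_Ici hI
  have hD := spacedBy_Dset_inter_Ioi hI
  set a := v1 (n + 1)
  set E := mex (Dset n)
  have key (e : ℕ) (he : 0 < e) (hlt : a + e < v2 (n + 1)) (h : a + e ∉ Fset n) : e ∈ Dset n :=
    mem_of_add_lt_mexAbove he hlt h
  have hEpos : 0 < E := one_le_mex_Dset n
  have hθ : a + E ∈ Fset n :=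
    not_not.1 fun h => mex_notMem (Dset_finite n) (key E hEpos (by omega) h)
  have far (i : ℕ) (hi : 0 < i) (hi3 : i < 3) : a + (E + i) ∉ Fset n := fun h => by
    have := hF (a + E) ⟨hθ, Set.mem_Ici.2 le_rfl⟩ _ ⟨h, Set.mem_Ici.2 (by omega)⟩ (by omega)
    omega
  have hE1 : E + 1 ∈ Dset n := key (E + 1) (by omega) (by omega) (far 1 (by omega) (by omega))
  suffices d = E + 1 from this ▸ hE1
  by_contra hd
  have hE2 : E + 2 ∈ Dset n := key (E + 2) (by omega) (by omega) (far 2 (by omega) (by omega))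
  have := hD (E + 1) ⟨hE1, Set.mem_Ioi.2 (by omega)⟩ (E + 2) ⟨hE2, Set.mem_Ioi.2 (by omega)⟩
    (by omega)
  omega

lemma v2_succ_lt (hI : ∀ k < n, Regular k) :
    v2 (n + 1) < v1 (n + 1) + mex (Dset (n + 1)) := by
  suffices h : Set.Iic (v2 (n + 1) - v1 (n + 1)) ⊆ Dset (n + 1) by
    have := lt_mex_of_Iic_subset (Dset_finite _) h
    omega
  intro d hd
  rcases lt_trichotomy d (mex (Dset n)) with hlt | rfl | hgt
  · exact Dset_mono n.le_succ (mem_of_lt_mex hlt)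
  · exact mem_Dset_iff.2 ⟨n + 1, le_rfl, Or.inr (Or.inl (by rw [v3_succ_eq hI]; omega))⟩
  · rcases (Set.mem_Iic.1 hd).lt_or_eq with hlt | rfl
    · exact Dset_mono n.le_succ (mem_Dset_of_lt_v2_sub_v1 hI hgt hlt)
    · exact mem_Dset_iff.2 ⟨n + 1, le_rfl, Or.inl rfl⟩

end Regular

lemma regular (n : ℕ) : Regular n :=
  Nat.strong_induction_on n fun _ hI => ⟨v3_succ_eq hI, v2_succ_lt hI⟩

theorem stmt14 : ∀ n : ℕ,
    ¬ ∃ k : ℕ, ∀ i : ℕ, i < 4 →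
      k + i ∈ Fset n ∩ Set.Icc (mex (Fset n)) (mex (Fset n) + mex (Dset n) - 1) := by
  intro n
  have hI : ∀ k < n, Regular k := fun k _ => regular k
  exact not_four_consecutive (spacedBy_v2 hI) (spacedBy_v3 hI)
    fun x ⟨hx, hxa, _⟩ => mem_image_of_v1_succ_le hx hxa
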